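/- arXiv:2504.06076 — 10 statements merged into one kernel-verified Lean document; each statement's English description precedes it below -/
import Mathlib

section
/- For all real x ≥ e, the integral ∫₀^{√(log x) − 1} e^{t²} dt is at most x, and x is at most ∫₀^{√(log x) + 1} e^{t²} dt. -/
open Real

theorem stmt_0 (x : ℝ) (hx : Real.exp 1 ≤ x) :
    (∫ t in (0:ℝ)..(Real.sqrt (Real.log x) - 1), Real.exp (t ^ 2)) ≤ x ∧
      x ≤ ∫ t in (0:ℝ)..(Real.sqrt (Real.log x) + 1), Real.exp (t ^ 2) := by
  have hx0 : 0 < x := lt_of_lt_of_le (Real.exp_pos 1) hx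
  have hlog : 1 ≤ Real.log x := by
    rw [Real.le_log_iff_exp_le hx0]; simpa using hx
  set L := Real.sqrt (Real.log x) with hLdef
  have hL1 : 1 ≤ L := by
    rw [hLdef, show (1:ℝ) = Real.sqrt 1 by simp]
    exact Real.sqrt_le_sqrt hlog
  have hL2 : L ^ 2 = Real.log x := Real.sq_sqrt (by linarith)
  have hxL : x = Real.exp (L ^ 2) := by rw [hL2, Real.exp_log hx0]
  have hcont : Continuous fun t : ℝ => Real.exp (t ^ 2) := Real.continuous_exp.comp (continuous_pow 2)
  have hint : ∀ a b : ℝ,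
      IntervalIntegrable (fun t => Real.exp (t ^ 2)) MeasureTheory.volume a b :=
    fun a b => hcont.intervalIntegrable a b
  constructor
  · have h1 : (∫ t in (0:ℝ)..(L - 1), Real.exp (t ^ 2))
        ≤ ∫ t in (0:ℝ)..(L - 1), Real.exp ((L - 1) ^ 2) := by
      apply intervalIntegral.integral_mono_on (by linarith) (hint 0 (L - 1))
        intervalIntegrable_const
      intro t ht
      exact Real.exp_le_exp.mpr (by nlinarith [ht.1, ht.2])
    have h2 : (∫ t in (0:ℝ)..(L - 1), Real.exp ((L - 1) ^ 2))
        = (L - 1) * Real.exp ((L - 1) ^ 2) := by simp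
    have h3 : (L - 1) * Real.exp ((L - 1) ^ 2) ≤ Real.exp (L ^ 2) := by
      have key : L - 1 ≤ Real.exp (2 * L - 1) := by
        have := Real.add_one_le_exp (2 * L - 1)
        linarith
      calc (L - 1) * Real.exp ((L - 1) ^ 2)
          ≤ Real.exp (2 * L - 1) * Real.exp ((L - 1) ^ 2) :=
            mul_le_mul_of_nonneg_right key (Real.exp_nonneg _)
        _ = Real.exp (L ^ 2) := by rw [← Real.exp_add]; ring_nf
    rw [hxL]; linarith
  · have hsplit : (∫ t in (0:ℝ)..(L + 1), Real.exp (t ^ 2))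
        = (∫ t in (0:ℝ)..L, Real.exp (t ^ 2)) + ∫ t in L..(L + 1), Real.exp (t ^ 2) :=
      (intervalIntegral.integral_add_adjacent_intervals (hint 0 L) (hint L (L + 1))).symm
    have h0 : 0 ≤ ∫ t in (0:ℝ)..L, Real.exp (t ^ 2) :=
      intervalIntegral.integral_nonneg (by linarith) (fun t _ => Real.exp_nonneg _)
    have h1 : Real.exp (L ^ 2) ≤ ∫ t in L..(L + 1), Real.exp (t ^ 2) := by
      have h : (∫ _t in L..(L + 1), Real.exp (L ^ 2))
          ≤ ∫ t in L..(L + 1), Real.exp (t ^ 2) := by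
        apply intervalIntegral.integral_mono_on (by linarith) intervalIntegrable_const
          (hint L (L + 1))
        intro t ht
        exact Real.exp_le_exp.mpr (by nlinarith [ht.1, ht.2])
      simpa using h
    rw [hxL, hsplit]; linarith
end

section
/- Let Ψ : [0,∞) → ℝ satisfy the ODE Ψ'(x) = exp(−3 Ψ(x)²) with Ψ(0) = 0. Then for all x ≥ e, √(log(√3·x)/3) − 1/√3 ≤ Ψ(x) ≤ √(log(√3·x)/3) + 1/√3. -/
/-!
Rescaling by `√3`, the function `G v = ∫₀ᵛ exp (w²) dw` satisfies `G (√3 Ψ x) = √3 x`, so with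
`σ = √(log (√3 x))` it suffices to show `σ - 1 ≤ √3 Ψ x ≤ σ + 1`, i.e., by monotonicity of `G`,
`G (σ - 1) ≤ exp (σ²) ≤ G (σ + 1)`. Bounding the integrand by its value at the right end gives
`G u ≤ u exp (u²) ≤ exp ((u + 1)²)`, and by its value at the left end of `[σ, σ + 1]` gives
`exp (σ²) ≤ G (σ + 1)`.
-/

open Real

noncomputable def expSqIntegral (v : ℝ) : ℝ := ∫ w in (0 : ℝ)..v, exp (w ^ 2)

lemma continuous_exp_sq : Continuous fun w : ℝ => exp (w ^ 2) := by fun_prop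

lemma hasDerivAt_expSqIntegral (v : ℝ) : HasDerivAt expSqIntegral (exp (v ^ 2)) v :=
  (continuous_exp_sq.integral_hasStrictDerivAt 0 v).hasDerivAt

lemma strictMono_expSqIntegral : StrictMono expSqIntegral :=
  strictMono_of_hasDerivAt_pos hasDerivAt_expSqIntegral fun _ => exp_pos _

lemma expSqIntegral_zero : expSqIntegral 0 = 0 := intervalIntegral.integral_same

lemma expSqIntegral_le_mul_exp_sq {u : ℝ} (hu : 0 ≤ u) : expSqIntegral u ≤ u * exp (u ^ 2) :=
  calc expSqIntegral u ≤ ∫ _ in (0 : ℝ)..u, exp (u ^ 2) :=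
        intervalIntegral.integral_mono_on hu (continuous_exp_sq.intervalIntegrable 0 u)
          intervalIntegrable_const fun w hw => exp_le_exp.2 (pow_le_pow_left₀ hw.1 hw.2 2)
    _ = u * exp (u ^ 2) := by simp

lemma expSqIntegral_sub_one_le_exp_sq (σ : ℝ) : expSqIntegral (σ - 1) ≤ exp (σ ^ 2) := by
  rcases le_or_gt 1 σ with hσ | hσ
  · have hle : σ - 1 ≤ exp (2 * σ - 1) := by linarith [add_one_le_exp (2 * σ - 1)]
    calc expSqIntegral (σ - 1) ≤ (σ - 1) * exp ((σ - 1) ^ 2) :=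
          expSqIntegral_le_mul_exp_sq (by linarith)
      _ ≤ exp (2 * σ - 1) * exp ((σ - 1) ^ 2) := by gcongr
      _ = exp (σ ^ 2) := by rw [← exp_add]; ring_nf
  · calc expSqIntegral (σ - 1) ≤ expSqIntegral 0 := strictMono_expSqIntegral.monotone (by linarith)
      _ ≤ exp (σ ^ 2) := by rw [expSqIntegral_zero]; positivity

lemma exp_sq_le_expSqIntegral_add_one {σ : ℝ} (hσ : 0 ≤ σ) :
    exp (σ ^ 2) ≤ expSqIntegral (σ + 1) :=
  calc exp (σ ^ 2) = ∫ _ in σ..σ + 1, exp (σ ^ 2) := by simp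
    _ ≤ ∫ w in σ..σ + 1, exp (w ^ 2) :=
        intervalIntegral.integral_mono_on (by linarith) intervalIntegrable_const
          (continuous_exp_sq.intervalIntegrable _ _)
          fun w hw => exp_le_exp.2 (pow_le_pow_left₀ hσ hw.1 2)
    _ = expSqIntegral (σ + 1) - expSqIntegral σ :=
        (intervalIntegral.integral_interval_sub_left (continuous_exp_sq.intervalIntegrable _ _)
          (continuous_exp_sq.intervalIntegrable _ _)).symm
    _ ≤ expSqIntegral (σ + 1) := by
        have := strictMono_expSqIntegral.monotone hσ
        rw [expSqIntegral_zero] at this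
        linarith

lemma expSqIntegral_sqrt_three_mul_eq (Ψ : ℝ → ℝ)
    (hΨ : ∀ x : ℝ, 0 ≤ x → HasDerivAt Ψ (exp (-3 * Ψ x ^ 2)) x) (hΨ0 : Ψ 0 = 0)
    {x : ℝ} (hx : 0 ≤ x) : expSqIntegral (√3 * Ψ x) = √3 * x := by
  set f : ℝ → ℝ := fun z => expSqIntegral (√3 * Ψ z) - √3 * z
  have hf : ∀ y, 0 ≤ y → HasDerivAt f 0 y := by
    intro y hy
    have h := ((hasDerivAt_expSqIntegral _).comp y ((hΨ y hy).const_mul √3)).sub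
      ((hasDerivAt_id y).const_mul √3)
    refine h.congr_deriv ?_
    rw [mul_pow, sq_sqrt zero_le_three, mul_one, mul_left_comm, ← exp_add,
      show 3 * Ψ y ^ 2 + -3 * Ψ y ^ 2 = 0 by ring, exp_zero, mul_one, sub_self]
  have hconst := constant_of_has_deriv_right_zero (a := 0) (b := x)
    (fun y hy => (hf y hy.1).continuousAt.continuousWithinAt)
    (fun y hy => (hf y hy.1).hasDerivWithinAt) x ⟨hx, le_rfl⟩
  simp only [f, hΨ0, mul_zero, expSqIntegral_zero, sub_zero] at hconst
  linarith

theorem stmt_1 (Ψ : ℝ → ℝ)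
    (hΨ : ∀ x : ℝ, 0 ≤ x → HasDerivAt Ψ (Real.exp (-3 * Ψ x ^ 2)) x)
    (hΨ0 : Ψ 0 = 0) :
    ∀ x : ℝ, Real.exp 1 ≤ x →
      Real.sqrt (Real.log (Real.sqrt 3 * x) / 3) - 1 / Real.sqrt 3 ≤ Ψ x ∧
        Ψ x ≤ Real.sqrt (Real.log (Real.sqrt 3 * x) / 3) + 1 / Real.sqrt 3 := by
  intro x hx
  have hx1 : 1 ≤ x := (one_le_exp zero_le_one).trans hx
  have h3 : 0 < √3 := sqrt_pos.2 three_pos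
  have hA : 1 ≤ √3 * x := one_le_mul_of_one_le_of_one_le (one_le_sqrt.2 (by norm_num)) hx1
  set σ := √(log (√3 * x))
  have hσA : exp (σ ^ 2) = √3 * x := by
    rw [sq_sqrt (log_nonneg hA), exp_log (by linarith)]
  have hΨA := expSqIntegral_sqrt_three_mul_eq Ψ hΨ hΨ0 (by linarith : 0 ≤ x)
  have hlow : σ - 1 ≤ √3 * Ψ x := strictMono_expSqIntegral.le_iff_le.1 <| by
    rw [hΨA, ← hσA]; exact expSqIntegral_sub_one_le_exp_sq σ
  have hup : √3 * Ψ x ≤ σ + 1 := strictMono_expSqIntegral.le_iff_le.1 <| by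
    rw [hΨA, ← hσA]; exact exp_sq_le_expSqIntegral_add_one (sqrt_nonneg _)
  rw [sqrt_div' _ zero_le_three, ← sub_div, ← add_div, div_le_iff₀ h3, le_div_iff₀ h3]
  constructor <;> linarith
end

section
/- Let Ψ satisfy Ψ'(x) = exp(−3 Ψ(x)²) with Ψ(0) = 0, fix σ > 0, and define q_j = Ψ'(jσ) and π_i = σ + Σ_{j=0}^{i−1} σ q_j. Then for every i ≥ 0, σ ≤ π_i − Ψ(iσ) ≤ 2σ. -/
open Real Finset

/-! Ψ is increasing with Ψ(0) = 0, so Ψ ≥ 0 and Ψ' = exp(−3Ψ²) is decreasing on [0, ∞).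
By the mean value theorem each increment Ψ((j+1)σ) − Ψ(jσ) lies between σ q_{j+1} and σ q_j.
Summing, Ψ(iσ) lies between Σ_{j<i} σ q_j + σ q_i − σ q_0 and Σ_{j<i} σ q_j;
since q_0 = 1 and q_i ≥ 0, this puts π_i − Ψ(iσ) in [σ, 2σ]. -/

lemma sub_mul_le_sub_le_sub_mul_of_antitoneOn {f f' : ℝ → ℝ} {a b : ℝ} (hab : a ≤ b)
    (hf : ∀ x ∈ Set.Icc a b, HasDerivAt f (f' x) x) (hf' : AntitoneOn f' (Set.Icc a b)) :
    (b - a) * f' b ≤ f b - f a ∧ f b - f a ≤ (b - a) * f' a := by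
  have hcont : ContinuousOn f (Set.Icc a b) := fun x hx =>
    (hf x hx).continuousAt.continuousWithinAt
  have hdiff : DifferentiableOn ℝ f (interior (Set.Icc a b)) := fun x hx =>
    (hf x (interior_subset hx)).differentiableAt.differentiableWithinAt
  have hderiv : ∀ x ∈ interior (Set.Icc a b), deriv f x = f' x := fun x hx =>
    (hf x (interior_subset hx)).deriv
  have ha : a ∈ Set.Icc a b := Set.left_mem_Icc.2 hab
  have hb : b ∈ Set.Icc a b := Set.right_mem_Icc.2 hab
  constructor
  · rw [mul_comm]
    refine (convex_Icc a b).mul_sub_le_image_sub_of_le_deriv hcont hdiff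
      (fun x hx => ?_) a ha b hb hab
    rw [hderiv x hx]
    exact hf' (interior_subset hx) hb (interior_subset hx).2
  · rw [mul_comm]
    refine (convex_Icc a b).image_sub_le_mul_sub_of_deriv_le hcont hdiff
      (fun x hx => ?_) a ha b hb hab
    rw [hderiv x hx]
    exact hf' ha (interior_subset hx) (interior_subset hx).1

lemma sum_range_add_sub_le_sub_le_sum_range {u c : ℕ → ℝ}
    (hc : ∀ j, c (j + 1) ≤ u (j + 1) - u j ∧ u (j + 1) - u j ≤ c j) (i : ℕ) :
    ∑ j ∈ range i, c j + c i - c 0 ≤ u i - u 0 ∧ u i - u 0 ≤ ∑ j ∈ range i, c j := by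
  have hshift : ∑ j ∈ range i, c (j + 1) = ∑ j ∈ range i, c j + c i - c 0 := by
    linarith [sum_range_succ c i, sum_range_succ' c i]
  rw [← hshift, ← sum_range_sub u i]
  exact ⟨sum_le_sum fun j _ => (hc j).1, sum_le_sum fun j _ => (hc j).2⟩

section ExpNegSq

variable {Ψ : ℝ → ℝ} {c : ℝ}

lemma monotoneOn_Ici_of_hasDerivAt_exp
    (hΨ : ∀ x : ℝ, 0 ≤ x → HasDerivAt Ψ (exp (-c * Ψ x ^ 2)) x) :
    MonotoneOn Ψ (Set.Ici 0) := by
  refine monotoneOn_of_hasDerivWithinAt_nonneg (f' := fun x => exp (-c * Ψ x ^ 2)) (convex_Ici 0)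
    (fun x hx => (hΨ x hx).continuousAt.continuousWithinAt) (fun x hx => ?_)
    (fun x _ => (exp_pos _).le)
  rw [interior_Ici] at hx
  exact (hΨ x (Set.mem_Ioi.1 hx).le).hasDerivWithinAt

lemma antitoneOn_Ici_exp_neg_mul_sq (hc : 0 ≤ c)
    (hΨ : ∀ x : ℝ, 0 ≤ x → HasDerivAt Ψ (exp (-c * Ψ x ^ 2)) x) (hΨ0 : Ψ 0 = 0) :
    AntitoneOn (fun x => exp (-c * Ψ x ^ 2)) (Set.Ici 0) := by
  intro a ha b hb hab
  have hmono := monotoneOn_Ici_of_hasDerivAt_exp hΨ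
  have hΨa : 0 ≤ Ψ a := hΨ0 ▸ hmono Set.self_mem_Ici ha ha
  have hsq : Ψ a ^ 2 ≤ Ψ b ^ 2 := pow_le_pow_left₀ hΨa (hmono ha hb hab) 2
  exact exp_le_exp.2 (by nlinarith)

end ExpNegSq

theorem stmt_3 (Ψ : ℝ → ℝ) (σ : ℝ) (hσ : 0 < σ)
    (hΨ : ∀ x : ℝ, 0 ≤ x → HasDerivAt Ψ (Real.exp (-3 * Ψ x ^ 2)) x)
    (hΨ0 : Ψ 0 = 0)
    (q : ℕ → ℝ) (hq : ∀ j : ℕ, q j = deriv Ψ (j * σ))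
    (Pi : ℕ → ℝ) (hPi : ∀ i : ℕ, Pi i = σ + ∑ j ∈ Finset.range i, σ * q j) :
    ∀ i : ℕ, σ ≤ Pi i - Ψ (i * σ) ∧ Pi i - Ψ (i * σ) ≤ 2 * σ := by
  have hanti := antitoneOn_Ici_exp_neg_mul_sq (by norm_num) hΨ hΨ0
  have hqe : ∀ j : ℕ, q j = exp (-3 * Ψ (j * σ) ^ 2) := fun j => by
    rw [hq, (hΨ _ (by positivity)).deriv]
  have hstep : ∀ j : ℕ, σ * q (j + 1) ≤ Ψ ((j + 1 : ℕ) * σ) - Ψ (j * σ) ∧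
      Ψ ((j + 1 : ℕ) * σ) - Ψ (j * σ) ≤ σ * q j := by
    intro j
    have hjσ : (0 : ℝ) ≤ j * σ := by positivity
    have hlen : ((j + 1 : ℕ) : ℝ) * σ - j * σ = σ := by push_cast; ring
    have h := sub_mul_le_sub_le_sub_mul_of_antitoneOn (a := j * σ) (b := (j + 1 : ℕ) * σ)
      (by linarith) (fun x hx => hΨ x (hjσ.trans hx.1)) (hanti.mono fun x hx => hjσ.trans hx.1)
    rwa [hlen, ← hqe, ← hqe] at h
  have hq0 : q 0 = 1 := by simp [hqe, hΨ0]
  intro i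
  obtain ⟨hlow, hupp⟩ := sum_range_add_sub_le_sub_le_sum_range (u := fun j => Ψ (j * σ))
    (c := fun j => σ * q j) hstep i
  have hqi : 0 ≤ q i := hqe i ▸ (exp_pos _).le
  simp only [Nat.cast_zero, zero_mul, hΨ0, sub_zero, ← mul_sum, hq0, mul_one] at hlow hupp
  rw [hPi, ← mul_sum]
  constructor <;> nlinarith
end

section
/- Let Ψ satisfy Ψ'(x) = exp(−3 Ψ(x)²) with Ψ(0) = 0, fix σ > 0 with σ ≤ 1/100, define q_i = Ψ'(iσ) and π_i = σ + Σ_{j=0}^{i−1} σ q_j. Then for every i ≥ 0 and k ∈ {1,2}, q_i · π_i^k ≤ 1. -/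
open Real Finset

/-!
Since `Ψ' = exp (-3 Ψ²)` is positive, `Ψ` is nonnegative and increasing on `[0, ∞)`, so `Ψ'` is
decreasing there. Hence `σ q_j` is a right-endpoint Riemann sum of `Ψ'` for `j ≥ 1`, which gives
`π_i ≤ 2σ + Ψ(iσ)`. With `x = Ψ(iσ)` and `q_i = exp (-3x²)`, the bounds
`exp (-3x²) x ≤ 1/2` and `exp (-3x²) x² ≤ 1/2` then absorb the `x` and `x²` terms of `π_i` and `π_i²`,
while `σ ≤ 1/100` controls the rest.
-/

lemma mul_le_sub_of_hasDerivAt_of_antitoneOn {f f' : ℝ → ℝ} {a b : ℝ} (hab : a < b)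
    (hf : ∀ x ∈ Set.Icc a b, HasDerivAt f (f' x) x) (hf' : AntitoneOn f' (Set.Icc a b)) :
    (b - a) * f' b ≤ f b - f a := by
  obtain ⟨c, hc, hslope⟩ := exists_hasDerivAt_eq_slope f f' hab
    (fun x hx => (hf x hx).continuousAt.continuousWithinAt)
    (fun x hx => hf x (Set.Ioo_subset_Icc_self hx))
  have hbc : f' b ≤ f' c :=
    hf' (Set.Ioo_subset_Icc_self hc) (Set.right_mem_Icc.2 hab.le) hc.2.le
  rw [hslope, le_div_iff₀ (sub_pos.2 hab)] at hbc
  linarith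

lemma sum_range_mul_le_sub_of_hasDerivAt_of_antitoneOn {f f' : ℝ → ℝ} {h : ℝ} (hh : 0 < h)
    (hf : ∀ x, 0 ≤ x → HasDerivAt f (f' x) x) (hf' : AntitoneOn f' (Set.Ici 0)) (n : ℕ) :
    ∑ j ∈ range n, h * f' ((j + 1 : ℕ) * h) ≤ f (n * h) - f 0 := by
  induction n with
  | zero => simp
  | succ n ih =>
    have hn : (0 : ℝ) ≤ n * h := by positivity
    have hstep := mul_le_sub_of_hasDerivAt_of_antitoneOn (f' := f')
      (show (n : ℝ) * h < (n + 1 : ℕ) * h by push_cast; linarith)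
      (fun x hx => hf x (hn.trans hx.1)) (hf'.mono fun x hx => hn.trans hx.1)
    rw [show ((n + 1 : ℕ) : ℝ) * h - n * h = h by push_cast; ring] at hstep
    rw [sum_range_succ]
    linarith

lemma exp_neg_mul_add_one_le_one (y : ℝ) : exp (-y) * (y + 1) ≤ 1 :=
  calc exp (-y) * (y + 1) ≤ exp (-y) * exp y := by gcongr; exact add_one_le_exp y
    _ = 1 := by rw [← exp_add, neg_add_cancel, exp_zero]

lemma exp_neg_three_mul_sq_mul_le (x : ℝ) : exp (-3 * x ^ 2) * x ≤ 1 / 2 := by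
  have hexp := exp_neg_mul_add_one_le_one (3 * x ^ 2)
  rw [show -3 * x ^ 2 = -(3 * x ^ 2) by ring]
  nlinarith [exp_pos (-(3 * x ^ 2)), sq_nonneg (3 * x - 1)]

lemma exp_neg_three_mul_sq_mul_sq_le (x : ℝ) : exp (-3 * x ^ 2) * x ^ 2 ≤ 1 / 2 := by
  have hexp := exp_neg_mul_add_one_le_one (3 * x ^ 2)
  rw [show -3 * x ^ 2 = -(3 * x ^ 2) by ring]
  nlinarith [exp_pos (-(3 * x ^ 2)), sq_nonneg x]

section

variable {Ψ : ℝ → ℝ} (hΨ : ∀ x : ℝ, 0 ≤ x → HasDerivAt Ψ (exp (-3 * Ψ x ^ 2)) x)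
include hΨ

lemma monotoneOn_Ici_of_hasDerivAt_exp_s5 : MonotoneOn Ψ (Set.Ici 0) :=
  monotoneOn_of_hasDerivWithinAt_nonneg (convex_Ici 0)
    (fun x hx => (hΨ x hx).continuousAt.continuousWithinAt)
    (fun x hx => (hΨ x (interior_subset hx)).hasDerivWithinAt)
    (fun _ _ => (exp_pos _).le)

variable (hΨ0 : Ψ 0 = 0)
include hΨ0

lemma nonneg_of_hasDerivAt_exp {x : ℝ} (hx : 0 ≤ x) : 0 ≤ Ψ x :=
  hΨ0 ▸ monotoneOn_Ici_of_hasDerivAt_exp_s5 hΨ Set.self_mem_Ici hx hx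

lemma antitoneOn_exp_neg_three_mul_sq : AntitoneOn (fun x => exp (-3 * Ψ x ^ 2)) (Set.Ici 0) := by
  intro a ha b hb hab
  have hΨa := nonneg_of_hasDerivAt_exp hΨ hΨ0 ha
  have hΨab := monotoneOn_Ici_of_hasDerivAt_exp_s5 hΨ ha hb hab
  simp only [exp_le_exp]
  nlinarith

lemma sum_range_mul_exp_le {σ : ℝ} (hσ : 0 < σ) (n : ℕ) :
    ∑ j ∈ range n, σ * exp (-3 * Ψ (j * σ) ^ 2) ≤ σ + Ψ (n * σ) := by
  have hriemann := sum_range_mul_le_sub_of_hasDerivAt_of_antitoneOn hσ hΨ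
    (antitoneOn_exp_neg_three_mul_sq hΨ hΨ0) n
  have hshift := sum_range_succ' (fun j : ℕ => σ * exp (-3 * Ψ (j * σ) ^ 2)) n
  rw [sum_range_succ] at hshift
  have hfirst : σ * exp (-3 * Ψ ((0 : ℕ) * σ) ^ 2) = σ := by simp [hΨ0]
  have hlast : 0 ≤ σ * exp (-3 * Ψ (n * σ) ^ 2) := by positivity
  rw [hΨ0] at hriemann
  linarith

end

theorem stmt_5 (Ψ : ℝ → ℝ) (σ : ℝ) (hσ : 0 < σ) (hσ' : σ ≤ 1 / 100)
    (hΨ : ∀ x : ℝ, 0 ≤ x → HasDerivAt Ψ (Real.exp (-3 * Ψ x ^ 2)) x)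
    (hΨ0 : Ψ 0 = 0)
    (q : ℕ → ℝ) (hq : ∀ j : ℕ, q j = deriv Ψ (j * σ))
    (Pi : ℕ → ℝ) (hPi : ∀ i : ℕ, Pi i = σ + ∑ j ∈ Finset.range i, σ * q j) :
    ∀ i : ℕ, ∀ k : ℕ, k = 1 ∨ k = 2 → q i * Pi i ^ k ≤ 1 := by
  have hq_eq : ∀ j : ℕ, q j = exp (-3 * Ψ (j * σ) ^ 2) := fun j =>
    (hq j).trans (hΨ _ (by positivity)).deriv
  intro i k hk
  set x := Ψ (i * σ)
  have hx : 0 ≤ x := nonneg_of_hasDerivAt_exp hΨ hΨ0 (by positivity)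
  have hqi_le : q i ≤ 1 := by rw [hq_eq i, exp_le_one_iff]; nlinarith
  have hPi_nonneg : 0 ≤ Pi i := by
    rw [hPi i, ← mul_sum]
    exact add_nonneg hσ.le (mul_nonneg hσ.le (sum_nonneg fun j _ => (hq_eq j ▸ exp_pos _).le))
  have hPi_le : Pi i ≤ x + 2 * σ := by
    have := sum_range_mul_exp_le hΨ hΨ0 hσ i
    simp only [hPi i, hq_eq]
    linarith
  have hqx := hq_eq i ▸ exp_neg_three_mul_sq_mul_le x
  have hqx2 := hq_eq i ▸ exp_neg_three_mul_sq_mul_sq_le x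
  rcases hk with rfl | rfl
  · nlinarith
  · nlinarith [mul_le_mul hPi_le hPi_le hPi_nonneg (by positivity)]
end

section
/- Let Ψ satisfy Ψ'(x) = exp(−3 Ψ(x)²) with Ψ(0) = 0, fix σ ∈ (0, 1/100], define q_i = Ψ'(iσ) and π_i = σ + Σ_{j=0}^{i−1} σ q_j. Then for every i ≥ 0, |(q_i − q_{i+1}) − 6σ q_i² π_i| ≤ 16 σ² q_i². -/
/-!
Since `Ψ' = exp (-3 Ψ²)` is positive, `Ψ` increases and stays nonnegative on `[0, ∞)`, so `Ψ'`
decreases there. Each increment `Ψ ((j + 1) σ) - Ψ (j σ)` therefore lies in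
`[σ q (j + 1), σ q j]`, and telescoping gives `π i - σ (2 - q i) ≤ Ψ (i σ) ≤ π i - σ`.

On `[i σ, (i + 1) σ]` the function `-Ψ'' = 6 Ψ Ψ'²` is at most `6 (q i)² π i` and, by
`e^{-u} ≥ 1 - u`, at least `6 (q i)² π i` minus a term affine in `t - i σ`. Comparing `Ψ'` with
the corresponding linear and quadratic functions bounds `q i - q (i + 1)` on both sides; the lower
bound closes because `exp (-3 A²) (18 (A + σ) (2 A + σ) - 6) ≤ 4`, a consequence of
`e^x ≥ 1 + x + x²/2`.
-/

open Real Set Finset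

theorem sub_le_sub_of_hasDerivAt_le {f g f' g' : ℝ → ℝ} {a b : ℝ} (hab : a ≤ b)
    (hf : ∀ x ∈ Icc a b, HasDerivAt f (f' x) x) (hg : ∀ x ∈ Icc a b, HasDerivAt g (g' x) x)
    (hle : ∀ x ∈ Icc a b, f' x ≤ g' x) : f b - f a ≤ g b - g a := by
  have hmono : MonotoneOn (fun x => g x - f x) (Icc a b) :=
    monotoneOn_of_hasDerivWithinAt_nonneg (convex_Icc a b)
      (fun x hx => ((hg x hx).continuousAt.sub (hf x hx).continuousAt).continuousWithinAt)
      (fun x hx => ((hg x (interior_subset hx)).sub (hf x (interior_subset hx))).hasDerivWithinAt)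
      (fun x hx => sub_nonneg.2 (hle x (interior_subset hx)))
  linarith [hmono (left_mem_Icc.2 hab) (right_mem_Icc.2 hab) hab]

theorem exp_sq_mul_le_exp_sq (A y : ℝ) :
    exp (-3 * A ^ 2) ^ 2 * (1 - 6 * (y ^ 2 - A ^ 2)) ≤ exp (-3 * y ^ 2) ^ 2 := by
  have hsplit : exp (-3 * y ^ 2) ^ 2 = exp (-3 * A ^ 2) ^ 2 * exp (-(6 * (y ^ 2 - A ^ 2))) := by
    rw [← exp_nat_mul, ← exp_nat_mul, ← exp_add]; push_cast; ring_nf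
  rw [hsplit]
  gcongr
  linarith [add_one_le_exp (-(6 * (y ^ 2 - A ^ 2)))]

theorem exp_neg_three_mul_sq_mul_le_s7 {A σ : ℝ} (hA : 0 ≤ A) (hσ : 0 ≤ σ) (hσ' : σ ≤ 1 / 100) :
    exp (-3 * A ^ 2) * (18 * (A + σ) * (2 * A + σ) - 6) ≤ 4 := by
  have hE := quadratic_le_exp_of_nonneg (by positivity : 0 ≤ 3 * A ^ 2)
  have hinv : exp (-3 * A ^ 2) * exp (3 * A ^ 2) = 1 := by rw [← exp_add]; simp
  have hpoly : 18 * (A + σ) * (2 * A + σ) - 6 ≤ 4 * exp (3 * A ^ 2) := by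
    nlinarith [sq_nonneg (3 * A ^ 2 - 2), sq_nonneg (A - 1), mul_nonneg hA hσ]
  nlinarith [exp_pos (-3 * A ^ 2)]

namespace ExpSqODE

variable {Ψ : ℝ → ℝ}

theorem hasDerivAt_exp_neg_three_mul_sq
    (hΨ : ∀ x, 0 ≤ x → HasDerivAt Ψ (exp (-3 * Ψ x ^ 2)) x) {x : ℝ} (hx : 0 ≤ x) :
    HasDerivAt (fun y => exp (-3 * Ψ y ^ 2)) (-6 * Ψ x * exp (-3 * Ψ x ^ 2) ^ 2) x := by
  convert (((hΨ x hx).fun_pow 2).const_mul (-3)).exp using 1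
  ring

theorem monotoneOn (hΨ : ∀ x, 0 ≤ x → HasDerivAt Ψ (exp (-3 * Ψ x ^ 2)) x) :
    MonotoneOn Ψ (Ici 0) :=
  monotoneOn_of_hasDerivWithinAt_nonneg (convex_Ici 0)
    (fun x hx => (hΨ x hx).continuousAt.continuousWithinAt)
    (fun x hx => (hΨ x (interior_subset hx)).hasDerivWithinAt)
    (fun _ _ => (exp_pos _).le)

theorem nonneg (hΨ : ∀ x, 0 ≤ x → HasDerivAt Ψ (exp (-3 * Ψ x ^ 2)) x) (hΨ0 : Ψ 0 = 0)
    {x : ℝ} (hx : 0 ≤ x) : 0 ≤ Ψ x :=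
  hΨ0 ▸ monotoneOn hΨ (mem_Ici.2 le_rfl) hx hx

theorem exp_antitoneOn (hΨ : ∀ x, 0 ≤ x → HasDerivAt Ψ (exp (-3 * Ψ x ^ 2)) x)
    (hΨ0 : Ψ 0 = 0) : AntitoneOn (fun x => exp (-3 * Ψ x ^ 2)) (Ici 0) := by
  intro x hx y hy hxy
  have := monotoneOn hΨ hx hy hxy
  have := nonneg hΨ hΨ0 hx
  simp only [exp_le_exp]
  nlinarith

theorem exp_mul_sub_le_sub (hΨ : ∀ x, 0 ≤ x → HasDerivAt Ψ (exp (-3 * Ψ x ^ 2)) x)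
    (hΨ0 : Ψ 0 = 0) {a b : ℝ} (ha : 0 ≤ a) (hab : a ≤ b) :
    exp (-3 * Ψ b ^ 2) * (b - a) ≤ Ψ b - Ψ a := by
  have := sub_le_sub_of_hasDerivAt_le hab (fun x _ => hasDerivAt_mul_const _)
    (fun x hx => hΨ x (ha.trans hx.1))
    (fun x hx => exp_antitoneOn hΨ hΨ0 (ha.trans hx.1) (ha.trans hab) hx.2)
  linarith

theorem sub_le_exp_mul_sub (hΨ : ∀ x, 0 ≤ x → HasDerivAt Ψ (exp (-3 * Ψ x ^ 2)) x)
    (hΨ0 : Ψ 0 = 0) {a b : ℝ} (ha : 0 ≤ a) (hab : a ≤ b) :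
    Ψ b - Ψ a ≤ exp (-3 * Ψ a ^ 2) * (b - a) := by
  have := sub_le_sub_of_hasDerivAt_le hab (fun x hx => hΨ x (ha.trans hx.1))
    (fun x _ => hasDerivAt_mul_const _)
    (fun x hx => exp_antitoneOn hΨ hΨ0 ha (ha.trans hx.1) hx.1)
  linarith

theorem sum_le_apply_nat_mul_le_sum (hΨ : ∀ x, 0 ≤ x → HasDerivAt Ψ (exp (-3 * Ψ x ^ 2)) x)
    (hΨ0 : Ψ 0 = 0) {σ : ℝ} (hσ : 0 ≤ σ) (n : ℕ) :
    ∑ j ∈ range n, σ * exp (-3 * Ψ ((j + 1 : ℕ) * σ) ^ 2) ≤ Ψ (n * σ) ∧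
      Ψ (n * σ) ≤ ∑ j ∈ range n, σ * exp (-3 * Ψ (j * σ) ^ 2) := by
  have htel : Ψ (n * σ) = ∑ j ∈ range n, (Ψ ((j + 1 : ℕ) * σ) - Ψ (j * σ)) := by
    rw [sum_range_sub (fun j : ℕ => Ψ (j * σ))]; simp [hΨ0]
  have hstep (j : ℕ) : ((j + 1 : ℕ) : ℝ) * σ - j * σ = σ := by push_cast; ring
  have hle (j : ℕ) : (j : ℝ) * σ ≤ ((j + 1 : ℕ) : ℝ) * σ := by linarith [hstep j]
  rw [htel]
  constructor <;> refine sum_le_sum fun j _ => ?_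
  · have := exp_mul_sub_le_sub hΨ hΨ0 (by positivity) (hle j)
    rw [hstep] at this; linarith
  · have := sub_le_exp_mul_sub hΨ hΨ0 (by positivity) (hle j)
    rw [hstep] at this; linarith

theorem exp_sub_exp_le (hΨ : ∀ x, 0 ≤ x → HasDerivAt Ψ (exp (-3 * Ψ x ^ 2)) x)
    (hΨ0 : Ψ 0 = 0) {a σ P : ℝ} (ha : 0 ≤ a) (hσ : 0 ≤ σ) (hP : Ψ a ≤ P - σ) :
    exp (-3 * Ψ a ^ 2) - exp (-3 * Ψ (a + σ) ^ 2) ≤ 6 * σ * exp (-3 * Ψ a ^ 2) ^ 2 * P := by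
  set Q := exp (-3 * Ψ a ^ 2)
  have hQ1 : Q ≤ 1 := exp_le_one_iff.2 (by nlinarith)
  have hbound : ∀ t ∈ Icc a (a + σ), -(6 * P * Q ^ 2) ≤ -6 * Ψ t * exp (-3 * Ψ t ^ 2) ^ 2 := by
    intro t ht
    have hΨt : Ψ t ≤ P := by
      have := sub_le_exp_mul_sub hΨ hΨ0 ha ht.1
      nlinarith [mul_le_mul_of_nonneg_right hQ1 (sub_nonneg.2 ht.1), ht.2]
    have hft : exp (-3 * Ψ t ^ 2) ^ 2 ≤ Q ^ 2 := by
      gcongr; exact exp_antitoneOn hΨ hΨ0 ha (ha.trans ht.1) ht.1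
    have := nonneg hΨ hΨ0 (ha.trans ht.1)
    nlinarith [mul_le_mul hΨt hft (sq_nonneg _) (this.trans hΨt)]
  have := sub_le_sub_of_hasDerivAt_le (by linarith) (fun x _ => hasDerivAt_mul_const _)
    (fun x hx => hasDerivAt_exp_neg_three_mul_sq hΨ (ha.trans hx.1)) hbound
  linarith

theorem le_exp_sub_exp (hΨ : ∀ x, 0 ≤ x → HasDerivAt Ψ (exp (-3 * Ψ x ^ 2)) x)
    (hΨ0 : Ψ 0 = 0) {a σ P : ℝ} (ha : 0 ≤ a) (hσ : 0 ≤ σ) (hσ' : σ ≤ 1 / 100)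
    (hP : P - σ * (2 - exp (-3 * Ψ a ^ 2)) ≤ Ψ a) :
    6 * σ * exp (-3 * Ψ a ^ 2) ^ 2 * P - 16 * σ ^ 2 * exp (-3 * Ψ a ^ 2) ^ 2 ≤
      exp (-3 * Ψ a ^ 2) - exp (-3 * Ψ (a + σ) ^ 2) := by
  set A := Ψ a
  set Q := exp (-3 * A ^ 2)
  have hA : 0 ≤ A := nonneg hΨ hΨ0 ha
  have hQ : 0 < Q := exp_pos _
  have hQ1 : Q ≤ 1 := exp_le_one_iff.2 (by nlinarith)
  set c₁ := 6 * σ * Q ^ 2 * (2 - Q)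
  set c₂ := 36 * Q ^ 3 * (A + σ) * (2 * A + σ)
  -- `c₁` pays for `P - Ψ t ≤ σ (2 - Q)`, `c₂` for the decay `Q² - Ψ' t ² ≤ 6 Q² (Ψ t ² - A²)`.
  have hbound : ∀ t ∈ Icc a (a + σ),
      -6 * Ψ t * exp (-3 * Ψ t ^ 2) ^ 2 ≤ -(6 * P * Q ^ 2 - c₁) + c₂ / 2 * (2 * (t - a)) := by
    intro t ht
    have hAt : A ≤ Ψ t := monotoneOn hΨ ha (ha.trans ht.1) ht.1
    have hinc : Ψ t - A ≤ Q * (t - a) := sub_le_exp_mul_sub hΨ hΨ0 ha ht.1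
    have hinc' : Q * (t - a) ≤ σ := by nlinarith [ht.1, ht.2]
    have hsq := exp_sq_mul_le_exp_sq A (Ψ t)
    have hprod : Ψ t * ((Ψ t - A) * (Ψ t + A)) ≤ (A + σ) * (Q * (t - a) * (2 * A + σ)) :=
      mul_le_mul (by linarith)
        (mul_le_mul hinc (by linarith) (by linarith) (mul_nonneg hQ.le (sub_nonneg.2 ht.1)))
        (by nlinarith) (by positivity)
    nlinarith [mul_le_mul_of_nonneg_left hsq (by linarith : 0 ≤ 6 * Ψ t),
      mul_le_mul_of_nonneg_left hprod (by positivity : 0 ≤ 36 * Q ^ 2),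
      mul_le_mul_of_nonneg_left (by linarith : P - σ * (2 - Q) ≤ Ψ t)
        (by positivity : 0 ≤ 6 * Q ^ 2)]
  have hG (x : ℝ) : HasDerivAt (fun x => x * -(6 * P * Q ^ 2 - c₁) + c₂ / 2 * (x - a) ^ 2)
      (-(6 * P * Q ^ 2 - c₁) + c₂ / 2 * (2 * (x - a))) x := by
    have hlin : HasDerivAt (fun x => x * -(6 * P * Q ^ 2 - c₁)) (-(6 * P * Q ^ 2 - c₁)) x :=
      hasDerivAt_mul_const _
    have hsq := ((hasDerivAt_id' x).sub_const a).fun_pow 2 |>.const_mul (c₂ / 2)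
    exact (hlin.fun_add hsq).congr_deriv (by norm_num)
  have := sub_le_sub_of_hasDerivAt_le (by linarith)
    (fun x hx => hasDerivAt_exp_neg_three_mul_sq hΨ (ha.trans hx.1)) (fun x _ => hG x) hbound
  have := exp_neg_three_mul_sq_mul_le_s7 hA hσ hσ'
  nlinarith [mul_le_mul_of_nonneg_left this (by positivity : 0 ≤ σ ^ 2 * Q ^ 2)]

end ExpSqODE

theorem stmt_7 (Ψ : ℝ → ℝ) (σ : ℝ) (hσ : 0 < σ) (hσ' : σ ≤ 1 / 100)
    (hΨ : ∀ x : ℝ, 0 ≤ x → HasDerivAt Ψ (Real.exp (-3 * Ψ x ^ 2)) x)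
    (hΨ0 : Ψ 0 = 0)
    (q : ℕ → ℝ) (hq : ∀ j : ℕ, q j = deriv Ψ (j * σ))
    (Pi : ℕ → ℝ) (hPi : ∀ i : ℕ, Pi i = σ + ∑ j ∈ Finset.range i, σ * q j) :
    ∀ i : ℕ, |(q i - q (i + 1)) - 6 * σ * q i ^ 2 * Pi i| ≤ 16 * σ ^ 2 * q i ^ 2 := by
  have hq_exp (j : ℕ) : q j = exp (-3 * Ψ (j * σ) ^ 2) := by
    rw [hq j, (hΨ _ (by positivity)).deriv]
  have hq_zero : q 0 = 1 := by simp [hq_exp, hΨ0]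
  intro i
  obtain ⟨hlow, hupp⟩ := ExpSqODE.sum_le_apply_nat_mul_le_sum hΨ hΨ0 hσ.le i
  simp only [← hq_exp] at hlow hupp
  have hsum_succ : ∑ j ∈ range i, σ * q (j + 1) = Pi i - σ * (2 - q i) := by
    have := sum_range_succ' (fun j => σ * q j) i
    rw [sum_range_succ, hq_zero] at this
    rw [hPi i]
    linarith
  have hq_succ : q (i + 1) = exp (-3 * Ψ (i * σ + σ) ^ 2) := by
    rw [hq_exp]; push_cast; ring_nf
  rw [hq_succ, abs_le]
  rw [hq_exp i] at hsum_succ ⊢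
  constructor
  · linarith [ExpSqODE.le_exp_sub_exp hΨ hΨ0 (a := i * σ) (by positivity) hσ.le hσ'
      (P := Pi i) (by linarith)]
  · linarith [ExpSqODE.exp_sub_exp_le hΨ hΨ0 (a := i * σ) (by positivity) hσ.le (P := Pi i)
      (by linarith [hPi i]), (by positivity : 0 ≤ 16 * σ ^ 2 * exp (-3 * Ψ (i * σ) ^ 2) ^ 2)]
end

section
/- Let Ψ satisfy Ψ'(x) = exp(−3 Ψ(x)²) with Ψ(0) = 0, fix σ ∈ (0, 1/100], define q_i = Ψ'(iσ) and π_i = σ + Σ_{j=0}^{i−1} σ q_j. Then for every i ≥ 0, 0 ≤ q_i − q_{i+1} ≤ 12 σ · min{q_i, q_{i+1}, q_i π_i}. -/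
/-!
`Ψ` is increasing and nonnegative on `[0, ∞)`, so `q = exp (-3 Ψ²)` decreases, and comparing `Ψ`
with its left Riemann sums gives `Ψ (iσ) + σ ≤ π_i`. With `a = Ψ (iσ)` and `b = Ψ ((i+1)σ)` we have
`b - a ≤ σ q_i`, and `q_i - q_{i+1}` equals both `q_{i+1} (exp (3 (b² - a²)) - 1)` and
`q_i (1 - exp (-3 (b² - a²)))`; each is controlled through `b² - a² ≤ (b - a) (2a + σ)`.
-/

open Real Set Finset

def HasDerivExpNegSq (Ψ : ℝ → ℝ) : Prop :=
  ∀ x : ℝ, 0 ≤ x → HasDerivAt Ψ (exp (-3 * Ψ x ^ 2)) x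

namespace HasDerivExpNegSq

variable {Ψ : ℝ → ℝ}

theorem deriv_eq (hΨ : HasDerivExpNegSq Ψ) {x : ℝ} (hx : 0 ≤ x) :
    deriv Ψ x = exp (-3 * Ψ x ^ 2) :=
  (hΨ x hx).deriv

theorem monotoneOn (hΨ : HasDerivExpNegSq Ψ) : MonotoneOn Ψ (Ici 0) := by
  refine (strictMonoOn_of_deriv_pos (convex_Ici 0)
    (fun x hx => (hΨ x hx).continuousAt.continuousWithinAt) fun x hx => ?_).monotoneOn
  rw [interior_Ici] at hx
  rw [hΨ.deriv_eq hx.le]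
  exact exp_pos _

theorem nonneg (hΨ : HasDerivExpNegSq Ψ) (hΨ0 : Ψ 0 = 0) {x : ℝ} (hx : 0 ≤ x) : 0 ≤ Ψ x :=
  hΨ0 ▸ hΨ.monotoneOn self_mem_Ici hx hx

theorem sub_le_mul_exp (hΨ : HasDerivExpNegSq Ψ) (hΨ0 : Ψ 0 = 0) {x y : ℝ} (hx : 0 ≤ x)
    (hxy : x ≤ y) : Ψ y - Ψ x ≤ exp (-3 * Ψ x ^ 2) * (y - x) := by
  have hIci : ∀ z ∈ Ici x, 0 ≤ z := fun z hz => hx.trans hz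
  refine (convex_Ici x).image_sub_le_mul_sub_of_deriv_le
    (fun z hz => (hΨ z (hIci z hz)).continuousAt.continuousWithinAt)
    (fun z hz => (hΨ z (hIci z (interior_subset hz))).differentiableAt.differentiableWithinAt)
    (fun z hz => ?_) x self_mem_Ici y hxy hxy
  have hz : x ≤ z := interior_subset (s := Ici x) hz
  have hΨxz : Ψ x ≤ Ψ z := hΨ.monotoneOn hx (hx.trans hz) hz
  rw [hΨ.deriv_eq (hx.trans hz), exp_le_exp]
  nlinarith [hΨ.nonneg hΨ0 hx]

theorem le_sum (hΨ : HasDerivExpNegSq Ψ) (hΨ0 : Ψ 0 = 0) {σ : ℝ} (hσ : 0 ≤ σ) (n : ℕ) :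
    Ψ (n * σ) ≤ ∑ j ∈ range n, σ * exp (-3 * Ψ (j * σ) ^ 2) := by
  induction n with
  | zero => simp [hΨ0]
  | succ n ih =>
    have hstep := hΨ.sub_le_mul_exp hΨ0 (by positivity : 0 ≤ n * σ)
      (by linarith : n * σ ≤ n * σ + σ)
    rw [sum_range_succ, Nat.cast_succ, add_one_mul]
    linarith

end HasDerivExpNegSq

theorem exp_neg_sq_sub_le_mul_add {a b σ : ℝ} (ha : 0 ≤ a) (hab : a ≤ b) (hba : b - a ≤ σ) :
    exp (-3 * a ^ 2) - exp (-3 * b ^ 2) ≤ 6 * σ * (a + σ) * exp (-3 * a ^ 2) := by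
  have hsplit : exp (-3 * b ^ 2) = exp (-3 * a ^ 2) * exp (-(3 * (b ^ 2 - a ^ 2))) := by
    rw [← exp_add]; ring_nf
  have hlin := add_one_le_exp (-(3 * (b ^ 2 - a ^ 2)))
  have hsq : 3 * (b ^ 2 - a ^ 2) ≤ 6 * σ * (a + σ) := by nlinarith
  rw [hsplit]
  nlinarith [exp_pos (-3 * a ^ 2)]

theorem exp_neg_sq_sub_le_mul_exp_neg_sq {a b σ : ℝ} (ha : 0 ≤ a) (hab : a ≤ b) (hσ : 0 ≤ σ)
    (hσ' : σ ≤ 1 / 4) (hba : b - a ≤ σ * exp (-3 * a ^ 2)) :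
    exp (-3 * a ^ 2) - exp (-3 * b ^ 2) ≤ 12 * σ * exp (-3 * b ^ 2) := by
  have hsplit : exp (-3 * a ^ 2) = exp (-3 * b ^ 2) * exp (3 * (b ^ 2 - a ^ 2)) := by
    rw [← exp_add]; ring_nf
  have he_le : exp (-3 * a ^ 2) ≤ 1 := exp_le_one_iff.2 (by nlinarith)
  -- `2a ≤ 1 + 3a² ≤ exp (3a²)`: the factor `a + b` is absorbed by the bound on `b - a`
  have hae : 2 * a * exp (-3 * a ^ 2) ≤ 1 := by
    have h1 : exp (-3 * a ^ 2) * exp (3 * a ^ 2) = 1 := by rw [← exp_add]; simp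
    nlinarith [add_one_le_exp (3 * a ^ 2), sq_nonneg (a - 1 / 3), exp_pos (-3 * a ^ 2)]
  have ht0 : 0 ≤ 3 * (b ^ 2 - a ^ 2) := by nlinarith
  have ht1 : 3 * (b ^ 2 - a ^ 2) ≤ 3 * σ * (1 + σ) := by
    have hsum : b + a ≤ 2 * a + σ := by nlinarith
    nlinarith [mul_le_mul_of_nonneg_left hsum (by positivity : 0 ≤ σ * exp (-3 * a ^ 2))]
  have hexp : exp (3 * (b ^ 2 - a ^ 2)) - 1 ≤ 12 * σ := by
    have h := abs_exp_sub_one_le (x := 3 * (b ^ 2 - a ^ 2))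
      (by rw [abs_of_nonneg ht0]; nlinarith)
    rw [abs_of_nonneg ht0] at h
    nlinarith [le_abs_self (exp (3 * (b ^ 2 - a ^ 2)) - 1)]
  rw [hsplit]
  nlinarith [exp_pos (-3 * b ^ 2)]

theorem stmt_8 (Ψ : ℝ → ℝ) (σ : ℝ) (hσ : 0 < σ) (hσ' : σ ≤ 1 / 100)
    (hΨ : ∀ x : ℝ, 0 ≤ x → HasDerivAt Ψ (Real.exp (-3 * Ψ x ^ 2)) x)
    (hΨ0 : Ψ 0 = 0)
    (q : ℕ → ℝ) (hq : ∀ j : ℕ, q j = deriv Ψ (j * σ))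
    (Pi : ℕ → ℝ) (hPi : ∀ i : ℕ, Pi i = σ + ∑ j ∈ Finset.range i, σ * q j) :
    ∀ i : ℕ, 0 ≤ q i - q (i + 1) ∧
      q i - q (i + 1) ≤ 12 * σ * min (min (q i) (q (i + 1))) (q i * Pi i) := by
  have hsol : HasDerivExpNegSq Ψ := hΨ
  have hq_exp (j : ℕ) : q j = exp (-3 * Ψ (j * σ) ^ 2) := by
    rw [hq, hsol.deriv_eq (by positivity)]
  intro i
  have hx : (0 : ℝ) ≤ i * σ := by positivity
  have hx' : (0 : ℝ) ≤ i * σ + σ := by positivity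
  set a := Ψ (i * σ)
  set b := Ψ (i * σ + σ)
  have ha : 0 ≤ a := hsol.nonneg hΨ0 hx
  have hab : a ≤ b := hsol.monotoneOn hx hx' (by linarith)
  have hba : b - a ≤ σ * exp (-3 * a ^ 2) := by
    have h := hsol.sub_le_mul_exp hΨ0 hx (by linarith : (i : ℝ) * σ ≤ i * σ + σ)
    rwa [add_sub_cancel_left, mul_comm (exp _)] at h
  have hba' : b - a ≤ σ :=
    hba.trans (mul_le_of_le_one_right hσ.le (exp_le_one_iff.2 (by nlinarith)))
  have hPi_ge : a + σ ≤ Pi i := by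
    rw [hPi, sum_congr rfl fun j _ => by rw [hq_exp j]]
    linarith [hsol.le_sum hΨ0 hσ.le i]
  have hanti : exp (-3 * b ^ 2) ≤ exp (-3 * a ^ 2) := by
    rw [exp_le_exp]; nlinarith
  rw [hq_exp, hq_exp, Nat.cast_succ, add_one_mul, min_eq_right hanti,
    mul_min_of_nonneg _ _ (by positivity)]
  refine ⟨sub_nonneg.2 hanti,
    le_min (exp_neg_sq_sub_le_mul_exp_neg_sq ha hab hσ.le (by linarith) hba) ?_⟩
  calc _ ≤ 6 * σ * (a + σ) * exp (-3 * a ^ 2) := exp_neg_sq_sub_le_mul_add ha hab hba'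
    _ ≤ 12 * σ * (exp (-3 * a ^ 2) * Pi i) := by nlinarith [exp_pos (-3 * a ^ 2)]
end

section
/- Let U be a finite set, (U_i)_{i∈I} a finite family of subsets of U, and let y, z be reals with z > 0 such that |U_i| ≥ z for all i, |U_i ∩ U_j| ≤ y for all i ≠ j, and z ≥ √(4|U|y). Then |I| ≤ 2|U|/z and Σ_{i∈I} |U_i| ≤ 2|U|. -/
/-!
Let `d x` be the number of sets `U_i` containing `x`, `S = ∑ |U_i| = ∑ₓ d x` and `k = |I|`.
Since `∑ₓ (d x)² = S + ∑_{i ≠ j} |U_i ∩ U_j| ≤ S + k (k - 1) y`, Cauchy–Schwarz gives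
`S² ≤ |U| (S + k (k - 1) y)`. As `4 |U| y ≤ z²` and `k z ≤ S`, the term `4 |U| k (k - 1) y` is
at most `S²`, so `3 S ≤ 4 |U|`; both bounds follow from `k z ≤ S ≤ 4 |U| / 3`.
-/

open Finset

section SetFamily

variable {α ι : Type*} [DecidableEq α] {U : Finset α} {I : Finset ι} {Us : ι → Finset α}

theorem sum_card_eq_sum_card_filter_mem (hsub : ∀ i ∈ I, Us i ⊆ U) :
    ∑ i ∈ I, #(Us i) = ∑ x ∈ U, #{i ∈ I | x ∈ Us i} := by
  simp_rw [card_eq_sum_ones, sum_filter]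
  rw [sum_comm]
  refine sum_congr rfl fun i hi => ?_
  rw [← sum_filter, filter_mem_eq_inter, inter_eq_right.2 (hsub i hi)]

theorem sum_card_filter_mem_sq (hsub : ∀ i ∈ I, Us i ⊆ U) :
    ∑ x ∈ U, #{i ∈ I | x ∈ Us i} ^ 2 = ∑ i ∈ I, ∑ j ∈ I, #(Us i ∩ Us j) := by
  simp_rw [sq, card_eq_sum_ones, sum_filter, sum_mul_sum, ite_zero_mul_ite_zero, mul_one]
  rw [sum_comm]
  refine sum_congr rfl fun i hi => ?_
  rw [sum_comm]
  refine sum_congr rfl fun j _ => ?_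
  rw [← sum_filter]
  congr 1
  ext x
  simp only [mem_filter, mem_inter]
  constructor
  · exact fun h => h.2
  · exact fun h => ⟨hsub i hi h.1, h⟩

theorem sq_sum_card_le_card_mul_sum_sum_card_inter (hsub : ∀ i ∈ I, Us i ⊆ U) :
    (∑ i ∈ I, #(Us i)) ^ 2 ≤ #U * ∑ i ∈ I, ∑ j ∈ I, #(Us i ∩ Us j) := by
  rw [sum_card_eq_sum_card_filter_mem hsub, ← sum_card_filter_mem_sq hsub]
  exact sq_sum_le_card_mul_sum_sq

theorem sum_sum_card_inter_eq [DecidableEq ι] :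
    ∑ i ∈ I, ∑ j ∈ I, #(Us i ∩ Us j) = ∑ i ∈ I, #(Us i) + ∑ p ∈ I.offDiag, #(Us p.1 ∩ Us p.2) := by
  rw [← sum_product' (f := fun i j => #(Us i ∩ Us j)), ← diag_union_offDiag,
    sum_union (disjoint_diag_offDiag _), diag, sum_map]
  simp only [Function.Embedding.coeFn_mk, Function.diag, inter_self]

theorem sq_sum_card_le_of_card_inter_le [DecidableEq ι] {y : ℝ} (hsub : ∀ i ∈ I, Us i ⊆ U)
    (hinter : ∀ i ∈ I, ∀ j ∈ I, i ≠ j → (#(Us i ∩ Us j) : ℝ) ≤ y) :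
    (∑ i ∈ I, (#(Us i) : ℝ)) ^ 2 ≤ #U * (∑ i ∈ I, (#(Us i) : ℝ) + #I.offDiag * y) := by
  have hoff : ∑ p ∈ I.offDiag, (#(Us p.1 ∩ Us p.2) : ℝ) ≤ #I.offDiag * y := by
    rw [← nsmul_eq_mul]
    refine sum_le_card_nsmul _ _ _ fun p hp => ?_
    obtain ⟨hi, hj, hij⟩ := mem_offDiag.1 hp
    exact hinter _ hi _ hj hij
  have hnat := sq_sum_card_le_card_mul_sum_sum_card_inter hsub
  rw [sum_sum_card_inter_eq] at hnat
  have hreal : (∑ i ∈ I, (#(Us i) : ℝ)) ^ 2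
      ≤ #U * (∑ i ∈ I, (#(Us i) : ℝ) + ∑ p ∈ I.offDiag, (#(Us p.1 ∩ Us p.2) : ℝ)) := by
    exact_mod_cast hnat
  exact hreal.trans (by gcongr)

end SetFamily

theorem stmt_9 {α ι : Type*} [DecidableEq α] (U : Finset α) (I : Finset ι)
    (Us : ι → Finset α) (y z : ℝ) (hz : 0 < z)
    (hsub : ∀ i ∈ I, Us i ⊆ U)
    (hlarge : ∀ i ∈ I, z ≤ (Us i).card)
    (hinter : ∀ i ∈ I, ∀ j ∈ I, i ≠ j → ((Us i ∩ Us j).card : ℝ) ≤ y)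
    (hzy : Real.sqrt (4 * U.card * y) ≤ z) :
    (I.card : ℝ) ≤ 2 * U.card / z ∧ (∑ i ∈ I, ((Us i).card : ℝ)) ≤ 2 * U.card := by
  classical
  set S := ∑ i ∈ I, (#(Us i) : ℝ)
  have hsecond := sq_sum_card_le_of_card_inter_le hsub hinter
  have hkS : #I * z ≤ S := by
    rw [← nsmul_eq_mul]
    exact card_nsmul_le_sum _ _ _ hlarge
  have hoff : 4 * #U * (#I.offDiag * y) ≤ (#I * z) ^ 2 := by
    rcases le_or_gt y 0 with hy | hy
    · have : (#I.offDiag : ℝ) * y ≤ 0 := mul_nonpos_of_nonneg_of_nonpos (by positivity) hy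
      nlinarith [sq_nonneg ((#I : ℝ) * z)]
    · have hy' : 4 * #U * y ≤ z ^ 2 := (Real.sqrt_le_left hz.le).1 hzy
      have hP : (#I.offDiag : ℝ) ≤ #I ^ 2 := by
        rw [offDiag_card, sq]
        exact_mod_cast Nat.sub_le _ _
      calc 4 * #U * (#I.offDiag * y) = #I.offDiag * (4 * #U * y) := by ring
        _ ≤ #I ^ 2 * z ^ 2 := by gcongr
        _ = (#I * z) ^ 2 := by ring
  have hS : 3 * S ≤ 4 * #U := by
    -- `4 S² ≤ 4 |U| S + (k z)² ≤ 4 |U| S + S²`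
    have hkz : 0 ≤ (#I : ℝ) * z := by positivity
    nlinarith
  refine ⟨?_, by linarith⟩
  rw [le_div_iff₀ hz]
  linarith
end

section
/- Let (ξ_i)_{i∈Q} be independent Bernoulli indicator random variables over a finite set Q, let (Q(α))_{α∈J} be a finite family of subsets of Q, set X_α = Π_{i∈Q(α)} ξ_i and X = Σ_{α∈J} X_α. Define X₀ as the maximum m such that there exist α₁,…,α_m ∈ J with X_{α_j} = 1 for all j and Q(α_j) pairwise disjoint. Then for every natural number k ≥ 1, P(X₀ ≥ k) ≤ E[X]^k / k!. -/
/-! If `X₀ ≥ k`, some `k` configurations with pairwise disjoint index sets all occur. By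
independence such a disjoint family `T` occurs with probability `∏ α ∈ T, E X_α`, so the union
bound gives `P(X₀ ≥ k) ≤ e_k`, the `k`-th elementary symmetric sum of the means `E X_α`. Each
`k`-subset appears in the multinomial expansion of `(∑ α, E X_α) ^ k` with coefficient `k!`,
whence `k! e_k ≤ (E X) ^ k`. -/

open MeasureTheory ProbabilityTheory Finset

namespace Finset

variable {γ : Type*} {s T : Finset γ}

lemma sum_indicator_one_of_subset (hT : T ⊆ s) :
    ∑ i ∈ s, (T : Set γ).indicator (1 : γ → ℕ) i = #T := by
  rw [sum_indicator_subset _ hT]; simp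

lemma multinomial_indicator_one (hT : T ⊆ s) :
    Nat.multinomial s ((T : Set γ).indicator 1) = (#T).factorial := by
  have h := Nat.multinomial_spec s ((T : Set γ).indicator 1)
  have hfac : ∀ i ∈ s, Nat.factorial ((T : Set γ).indicator 1 i) = 1 := by
    intro i _
    by_cases hi : i ∈ T <;> simp [hi]
  rwa [prod_eq_one hfac, one_mul, sum_indicator_one_of_subset hT] at h

lemma prod_pow_indicator_one {M : Type*} [CommMonoid M] (q : γ → M) (hT : T ⊆ s) :
    ∏ i ∈ s, q i ^ (T : Set γ).indicator 1 i = ∏ i ∈ T, q i := by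
  rw [← prod_subset hT]
  · exact prod_congr rfl fun i hi => by simp [hi]
  · intro i _ hi; simp [hi]

lemma factorial_mul_sum_powersetCard_prod_le_pow_sum {R : Type*} [CommSemiring R]
    [PartialOrder R] [IsOrderedRing R] (s : Finset γ) (q : γ → R) (hq : ∀ i ∈ s, 0 ≤ q i)
    (k : ℕ) : (k.factorial : R) * ∑ T ∈ s.powersetCard k, ∏ i ∈ T, q i ≤ (∑ i ∈ s, q i) ^ k := by
  classical
  let c : Finset γ → γ → ℕ := fun T => (T : Set γ).indicator 1
  have hc_inj : Set.InjOn c (s.powersetCard k) := fun T _ T' _ h => by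
    exact_mod_cast Set.indicator_one_inj (M₀ := ℕ) h
  rw [sum_pow_eq_sum_piAntidiag, mul_sum]
  calc ∑ T ∈ s.powersetCard k, (k.factorial : R) * ∏ i ∈ T, q i
      = ∑ T ∈ s.powersetCard k, (Nat.multinomial s (c T) : R) * ∏ i ∈ s, q i ^ c T i := by
        refine sum_congr rfl fun T hT => ?_
        obtain ⟨hTs, rfl⟩ := mem_powersetCard.mp hT
        rw [multinomial_indicator_one hTs, prod_pow_indicator_one q hTs]
    _ = ∑ d ∈ (s.powersetCard k).image c, (Nat.multinomial s d : R) * ∏ i ∈ s, q i ^ d i :=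
        (sum_image (f := fun d => (Nat.multinomial s d : R) * ∏ i ∈ s, q i ^ d i) hc_inj).symm
    _ ≤ _ := by
        refine sum_le_sum_of_subset_of_nonneg ?_ fun d _ _ => ?_
        · simp only [subset_iff, mem_image, mem_powersetCard, mem_piAntidiag]
          rintro _ ⟨T, ⟨hTs, rfl⟩, rfl⟩
          refine ⟨sum_indicator_one_of_subset hTs, fun i hi => hTs ?_⟩
          simpa [c] using hi
        · exact mul_nonneg (Nat.cast_nonneg _) (prod_nonneg fun i hi => pow_nonneg (hq i hi) _)

end Finset

section Bernoulli

variable {Ω ι : Type*} {ξ : ι → Ω → ℝ}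

lemma prod_eq_indicator_biInter_preimage_one (h01 : ∀ i ω, ξ i ω = 0 ∨ ξ i ω = 1)
    (S : Finset ι) (ω : Ω) :
    ∏ i ∈ S, ξ i ω = (⋂ i ∈ S, ξ i ⁻¹' {1}).indicator 1 ω := by
  by_cases h : ∀ i ∈ S, ξ i ω = 1
  · rw [Set.indicator_of_mem (by simpa using h), prod_eq_one h, Pi.one_apply]
  · obtain ⟨i, hi, hne⟩ := not_forall₂.mp h
    rw [Set.indicator_of_notMem (by simpa using ⟨i, hi, hne⟩),
      prod_eq_zero hi ((h01 i ω).resolve_right hne)]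

variable [MeasurableSpace Ω] {μ : Measure Ω}

lemma measurableSet_biInter_preimage_one (hmeas : ∀ i, Measurable (ξ i)) (S : Finset ι) :
    MeasurableSet (⋂ i ∈ S, ξ i ⁻¹' {1}) :=
  S.measurableSet_biInter fun i _ => hmeas i (measurableSet_singleton 1)

lemma integrable_prod_of_zero_or_one [IsFiniteMeasure μ] (hmeas : ∀ i, Measurable (ξ i))
    (h01 : ∀ i ω, ξ i ω = 0 ∨ ξ i ω = 1) (S : Finset ι) :
    Integrable (fun ω => ∏ i ∈ S, ξ i ω) μ := by
  simp_rw [prod_eq_indicator_biInter_preimage_one h01 S]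
  exact (integrable_const 1).indicator (measurableSet_biInter_preimage_one hmeas S)

lemma ProbabilityTheory.iIndepFun.measureReal_biInter_preimage_one (hind : iIndepFun ξ μ)
    (S : Finset ι) :
    μ.real (⋂ i ∈ S, ξ i ⁻¹' {1}) = ∏ i ∈ S, μ.real (ξ i ⁻¹' {1}) := by
  rw [Measure.real, hind.meas_biInter fun i _ => ⟨{1}, measurableSet_singleton 1, rfl⟩,
    ENNReal.toReal_prod]
  rfl

lemma ProbabilityTheory.iIndepFun.integral_prod_of_zero_or_one (hmeas : ∀ i, Measurable (ξ i))
    (h01 : ∀ i ω, ξ i ω = 0 ∨ ξ i ω = 1) (hind : iIndepFun ξ μ) (S : Finset ι) :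
    ∫ ω, ∏ i ∈ S, ξ i ω ∂μ = ∏ i ∈ S, μ.real (ξ i ⁻¹' {1}) := by
  simp_rw [prod_eq_indicator_biInter_preimage_one h01 S]
  rw [integral_indicator_one (measurableSet_biInter_preimage_one hmeas S),
    hind.measureReal_biInter_preimage_one]

end Bernoulli

theorem stmt_10_general {Ω ι γ : Type*} [MeasurableSpace Ω]
    (μ : Measure Ω) [IsProbabilityMeasure μ]
    (ξ : ι → Ω → ℝ) (hmeas : ∀ i, Measurable (ξ i))
    (h01 : ∀ i ω, ξ i ω = 0 ∨ ξ i ω = 1)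
    (hind : iIndepFun ξ μ)
    (Q : γ → Finset ι) (J : Finset γ) (k : ℕ) :
    (μ {ω | ∃ T : Finset γ, T ⊆ J ∧ T.card = k ∧
        (∀ α ∈ T, ∀ i ∈ Q α, ξ i ω = 1) ∧
        (T : Set γ).Pairwise (fun α β => Disjoint (Q α) (Q β))}).toReal ≤
      (∫ ω, ∑ α ∈ J, ∏ i ∈ Q α, ξ i ω ∂μ) ^ k / (Nat.factorial k) := by
  classical
  set q : γ → ℝ := fun α => ∏ i ∈ Q α, μ.real (ξ i ⁻¹' {1})
  have hq : ∀ α, 0 ≤ q α := fun _ => prod_nonneg fun _ _ => measureReal_nonneg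
  set D := (J.powersetCard k).filter fun T : Finset γ =>
    (T : Set γ).Pairwise fun α β => Disjoint (Q α) (Q β)
  have hcover : {ω | ∃ T : Finset γ, T ⊆ J ∧ T.card = k ∧
        (∀ α ∈ T, ∀ i ∈ Q α, ξ i ω = 1) ∧
        (T : Set γ).Pairwise (fun α β => Disjoint (Q α) (Q β))}
      ⊆ ⋃ T ∈ D, ⋂ i ∈ T.biUnion Q, ξ i ⁻¹' {1} := by
    rintro ω ⟨T, hTJ, hTk, hT1, hTdisj⟩
    simp only [Set.mem_iUnion, Set.mem_iInter, mem_biUnion]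
    exact ⟨T, mem_filter.mpr ⟨mem_powersetCard.mpr ⟨hTJ, hTk⟩, hTdisj⟩,
      fun i ⟨α, hα, hi⟩ => hT1 α hα i hi⟩
  have hdisjoint : ∀ T ∈ D, μ.real (⋂ i ∈ T.biUnion Q, ξ i ⁻¹' {1}) = ∏ α ∈ T, q α :=
    fun T hT => by
      rw [hind.measureReal_biInter_preimage_one, prod_biUnion (mem_filter.mp hT).2]
  have hmean : ∫ ω, ∑ α ∈ J, ∏ i ∈ Q α, ξ i ω ∂μ = ∑ α ∈ J, q α := by
    rw [integral_finsetSum J fun α _ => integrable_prod_of_zero_or_one hmeas h01 (Q α)]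
    exact sum_congr rfl fun α _ => hind.integral_prod_of_zero_or_one hmeas h01 (Q α)
  calc μ.real _ ≤ ∑ T ∈ D, μ.real (⋂ i ∈ T.biUnion Q, ξ i ⁻¹' {1}) :=
        (measureReal_mono hcover (measure_ne_top μ _)).trans (measureReal_biUnion_finset_le _ _)
    _ = ∑ T ∈ D, ∏ α ∈ T, q α := sum_congr rfl hdisjoint
    _ ≤ ∑ T ∈ J.powersetCard k, ∏ α ∈ T, q α :=
        sum_le_sum_of_subset_of_nonneg (filter_subset _ _) fun _ _ _ =>
          prod_nonneg fun α _ => hq α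
    _ ≤ (∑ α ∈ J, q α) ^ k / k.factorial := by
        rw [le_div_iff₀ (by positivity), mul_comm]
        exact factorial_mul_sum_powersetCard_prod_le_pow_sum J q
          (fun α _ => hq α) k
    _ = _ := by rw [hmean]

theorem stmt_10 {Ω ι γ : Type*} [MeasurableSpace Ω] [Fintype ι] [DecidableEq ι]
    (μ : Measure Ω) [IsProbabilityMeasure μ]
    (ξ : ι → Ω → ℝ) (hmeas : ∀ i, Measurable (ξ i))
    (h01 : ∀ i ω, ξ i ω = 0 ∨ ξ i ω = 1)
    (hind : iIndepFun ξ μ)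
    (Q : γ → Finset ι) (J : Finset γ) (k : ℕ) (hk : 1 ≤ k) :
    (μ {ω | ∃ T : Finset γ, T ⊆ J ∧ T.card = k ∧
        (∀ α ∈ T, ∀ i ∈ Q α, ξ i ω = 1) ∧
        (T : Set γ).Pairwise (fun α β => Disjoint (Q α) (Q β))}).toReal ≤
      (∫ ω, ∑ α ∈ J, ∏ i ∈ Q α, ξ i ω ∂μ) ^ k / (Nat.factorial k) :=
  stmt_10_general μ ξ hmeas h01 hind Q J k
end

section
/- Every triangle-free graph on N vertices has independence number Ω(√(N log N)); consequently, there is a constant c' such that the Ramsey number r(K₄⁻, S_n) satisfies r(K₄⁻, S_n) ≤ c' n² / log n for all large n, where the 3-graph argument is: in a K₄⁻-free 3-uniform hypergraph on N vertices every link graph is triangle-free. -/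
/-!
In a `K₄⁻`-free 3-graph the link graph of any vertex `x` is triangle-free: a triangle `abd` in
it would give the three edges `xab, xad, xbd` inside the four vertices `{x, a, b, d}`. An
independent set of the link graph, minus `x`, is the leaf set of a star centred at `x` missing
from the 3-graph. Once `N ≥ c' n² / log n` with `c' ≥ max 1 c⁻²`, the independence bound
`c √(N log N)` exceeds `n`.
-/

open Finset

namespace Hypergraph3

variable {α : Type*} [DecidableEq α]

def linkGraph (H : Finset (Finset α)) (x : α) : SimpleGraph α where
  Adj y z := y ≠ z ∧ {x, y, z} ∈ H
  symm := ⟨fun y z h => ⟨h.1.symm, pair_comm y z ▸ h.2⟩⟩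
  loopless := ⟨fun _ h => h.1 rfl⟩

theorem linkGraph_adj {H : Finset (Finset α)} {x y z : α} :
    (linkGraph H x).Adj y z ↔ y ≠ z ∧ {x, y, z} ∈ H := Iff.rfl

theorem ne_and_ne_and_ne_of_card_eq_three {x y z : α} (h : #{x, y, z} = 3) :
    x ≠ y ∧ x ≠ z ∧ y ≠ z := by
  grind [card_eq_three]

theorem card_triple_of_ne {x a b d : α} (hxa : x ≠ a) (hxd : x ≠ d) (hab : a ≠ b)
    (had : a ≠ d) (hbd : b ≠ d) :
    #({{x, a, b}, {x, a, d}, {x, b, d}} : Finset (Finset α)) = 3 := by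
  have hd : d ∉ ({x, a, b} : Finset α) := by simp [hxd.symm, had.symm, hbd.symm]
  refine card_eq_three.mpr ⟨_, _, _, ?_, ?_, ?_, rfl⟩
  · exact (ne_of_mem_of_not_mem' (by simp) hd).symm
  · exact (ne_of_mem_of_not_mem' (by simp) hd).symm
  · exact ne_of_mem_of_not_mem' (a := a) (by simp) (by simp [hxa.symm, hab, had])

theorem linkGraph_cliqueFree_three {H : Finset (Finset α)} (hH : ∀ e ∈ H, #e = 3)
    (hK : ∀ S : Finset α, #S = 4 → #((S.powersetCard 3).filter (· ∈ H)) ≤ 2) (x : α) :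
    (linkGraph H x).CliqueFree 3 := by
  intro t ht
  obtain ⟨a, b, d, hab, had, hbd, -⟩ := SimpleGraph.is3Clique_iff.mp ht
  obtain ⟨hab, habH⟩ := linkGraph_adj.mp hab
  obtain ⟨had, hadH⟩ := linkGraph_adj.mp had
  obtain ⟨hbd, hbdH⟩ := linkGraph_adj.mp hbd
  obtain ⟨hxa, hxb, -⟩ := ne_and_ne_and_ne_of_card_eq_three (hH _ habH)
  obtain ⟨-, hxd, -⟩ := ne_and_ne_and_ne_of_card_eq_three (hH _ hadH)
  have hS : #({x, a, b, d} : Finset α) = 4 :=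
    card_eq_four.mpr ⟨x, a, b, d, hxa, hxb, hxd, hab, had, hbd, rfl⟩
  have hsub : {{x, a, b}, {x, a, d}, {x, b, d}} ⊆
      ((({x, a, b, d} : Finset α).powersetCard 3).filter (· ∈ H)) := by
    intro e he
    simp only [mem_insert, mem_singleton] at he
    rcases he with rfl | rfl | rfl <;>
      refine mem_filter.mpr ⟨mem_powersetCard.mpr ⟨?_, hH _ ‹_›⟩, ‹_›⟩ <;>
      intro w <;> simp only [mem_insert, mem_singleton] <;> tauto
  have := (card_le_card hsub).trans (hK _ hS)
  rw [card_triple_of_ne hxa hxd hab had hbd] at this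
  omega

theorem exists_star_compl_of_isIndepSet_linkGraph {H : Finset (Finset α)} {x : α}
    {s : Finset α} (hs : (linkGraph H x).IsIndepSet s) {n : ℕ} (hn : n ≤ #s) :
    ∃ A : Finset α, x ∉ A ∧ #A = n - 1 ∧ ∀ a ∈ A, ∀ b ∈ A, a ≠ b → {x, a, b} ∉ H := by
  obtain ⟨A, hAs, hA⟩ :=
    exists_subset_card_eq ((Nat.sub_le_sub_right hn 1).trans pred_card_le_card_erase)
  refine ⟨A, (notMem_erase x s <| hAs ·), hA, fun a ha b hb hab habH => ?_⟩
  exact hs (mem_of_mem_erase (hAs ha)) (mem_of_mem_erase (hAs hb)) hab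
    (linkGraph_adj.mpr ⟨hab, habH⟩)

end Hypergraph3

theorem natCast_le_mul_sqrt_mul_log {c : ℝ} (hc : 0 < c) {n : ℕ} (hn : 2 ≤ n) {N : ℝ}
    (hN : max 1 (c⁻¹ ^ 2) * n ^ 2 / Real.log n ≤ N) : (n : ℝ) ≤ c * √(N * Real.log N) := by
  have hn' : (1 : ℝ) < n := by exact_mod_cast hn
  have hlog : 0 < Real.log n := Real.log_pos hn'
  have hNlog : max 1 (c⁻¹ ^ 2) * n ^ 2 ≤ N * Real.log n := (div_le_iff₀ hlog).mp hN
  have hnN : (n : ℝ) ≤ N := by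
    have := Real.log_le_self (Nat.cast_nonneg n)
    have := le_max_left 1 (c⁻¹ ^ 2)
    nlinarith
  have hlogN : Real.log n ≤ Real.log N := Real.log_le_log (by linarith) hnN
  have hsq : (n / c) ^ 2 ≤ N * Real.log N := calc
    (n / c) ^ 2 = c⁻¹ ^ 2 * n ^ 2 := by ring
    _ ≤ max 1 (c⁻¹ ^ 2) * n ^ 2 := by gcongr; exact le_max_right _ _
    _ ≤ N * Real.log n := hNlog
    _ ≤ N * Real.log N := by gcongr; linarith
  calc (n : ℝ) = c * (n / c) := by field_simp
    _ ≤ c * √(N * Real.log N) := by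
      gcongr; exact (Real.le_sqrt (by positivity) ((sq_nonneg _).trans hsq)).mpr hsq

theorem stmt_11 (c : ℝ) (hc : 0 < c)
    -- every triangle-free graph on N vertices has an independent set of size ≥ c·√(N log N)
    (h3n : ∀ (N : ℕ) (G : SimpleGraph (Fin N)), G.CliqueFree 3 →
      ∃ s : Finset (Fin N), (Gᶜ).IsClique (↑s : Set (Fin N)) ∧
        c * Real.sqrt (N * Real.log N) ≤ s.card) :
    ∃ c' : ℝ, 0 < c' ∧ ∃ n₀ : ℕ, ∀ n : ℕ, n₀ ≤ n → ∀ N : ℕ,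
      c' * (n : ℝ) ^ 2 / Real.log n ≤ N →
      ∀ H : Finset (Finset (Fin N)), (∀ e ∈ H, e.card = 3) →
        -- K₄⁻-free: no four vertices span three or more edges
        (∀ S : Finset (Fin N), S.card = 4 →
          ((S.powersetCard 3).filter (· ∈ H)).card ≤ 2) →
        -- the complement contains a copy of the star S_n
        ∃ x : Fin N, ∃ A : Finset (Fin N), x ∉ A ∧ A.card = n - 1 ∧
          ∀ a ∈ A, ∀ b ∈ A, a ≠ b → ({x, a, b} : Finset (Fin N)) ∉ H := by
  refine ⟨max 1 (c⁻¹ ^ 2), lt_max_of_lt_left one_pos, 2, fun n hn N hN H hH hK => ?_⟩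
  have hnN : n ≤ c * Real.sqrt (N * Real.log N) := natCast_le_mul_sqrt_mul_log hc hn hN
  have hN0 : 0 < N := Nat.pos_of_ne_zero (by rintro rfl; simp at hnN; omega)
  let x : Fin N := ⟨0, hN0⟩
  obtain ⟨s, hs, hcard⟩ :=
    h3n N (Hypergraph3.linkGraph H x) (Hypergraph3.linkGraph_cliqueFree_three hH hK x)
  exact ⟨x, Hypergraph3.exists_star_compl_of_isIndepSet_linkGraph
    ((SimpleGraph.isClique_compl _).1 hs) (by exact_mod_cast hnN.trans hcard)⟩
end

section
/- Let E be a set of triples on a vertex set V, let O be a set of triples disjoint from E such that no triple in O forms a K₄⁻ together with two triples of E, let H ⊆ E be K₄⁻-free, and let Γ ⊆ O. Define B² = {pairs {e,f} ⊆ Γ : ∃ g ∈ H with e,f,g forming a K₄⁻} and B³ = {triples {e,f,g} ⊆ Γ forming a K₄⁻}, and let D be a subset of B² ∪ B³ such that every member of B² ∪ B³ contains at least one triple lying in some member of D. Then H ∪ (Γ ∖ ⋃_{S∈D} S) is K₄⁻-free. -/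
open Finset

/-- A `K₄⁻`: three triples spanning a common 4-element vertex set. -/
def IsK4minus {V : Type*} [DecidableEq V] (t : Finset (Finset V)) : Prop :=
  ∃ S : Finset V, S.card = 4 ∧ t.card = 3 ∧ ∀ e ∈ t, e ⊆ S ∧ e.card = 3

/-- A family of triples is `K₄⁻`-free. -/
def K4minusFree {V : Type*} [DecidableEq V] (H : Finset (Finset V)) : Prop :=
  ¬ ∃ t : Finset (Finset V), t ⊆ H ∧ IsK4minus t

theorem stmt_13 {V : Type*} [DecidableEq V]
    (E O H Γ : Finset (Finset V)) (D : Finset (Finset (Finset V)))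
    (hHE : H ⊆ E) (hΓO : Γ ⊆ O) (hdisj : Disjoint O E)
    (hopen : ∀ e ∈ O, ¬ ∃ f ∈ E, ∃ g ∈ E, IsK4minus {e, f, g})
    (hHfree : K4minusFree H)
    (B2 : Finset (Finset V) → Prop)
    (hB2 : ∀ S, B2 S ↔ S ⊆ Γ ∧ S.card = 2 ∧ ∃ g ∈ H, IsK4minus (insert g S))
    (B3 : Finset (Finset V) → Prop)
    (hB3 : ∀ S, B3 S ↔ S ⊆ Γ ∧ IsK4minus S)
    (hD : ∀ S ∈ D, B2 S ∨ B3 S)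
    (hcover : ∀ S : Finset (Finset V), B2 S ∨ B3 S → ∃ e ∈ S, ∃ T ∈ D, e ∈ T) :
    K4minusFree (H ∪ (Γ \ D.biUnion id)) := by
  rintro ⟨t, htsub, S, hS4, hcard3, hmem⟩
  obtain ⟨a, b, c, hab, hac, hbc, rfl⟩ := Finset.card_eq_three.mp hcard3
  set Γ' := Γ \ D.biUnion id with hΓ'
  have hΓ'Γ : Γ' ⊆ Γ := Finset.sdiff_subset
  have hnotD : ∀ x ∈ Γ', ∀ T ∈ D, x ∉ T := by
    intro x hx T hT hxT
    exact (Finset.mem_sdiff.mp hx).2 (Finset.mem_biUnion.mpr ⟨T, hT, hxT⟩)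
  have case1 : ∀ x y z : Finset V, ({x, y, z} : Finset (Finset V)) = {a, b, c} →
      x ∈ Γ' → y ∈ H → z ∈ H → False := by
    intro x y z heq hx hy hz
    exact hopen x (hΓO (hΓ'Γ hx)) ⟨y, hHE hy, z, hHE hz, S, hS4, by
      rw [heq]; exact ⟨hcard3, hmem⟩⟩
  have case2 : ∀ x y z : Finset V, ({x, y, z} : Finset (Finset V)) = {a, b, c} →
      x ≠ y → x ∈ Γ' → y ∈ Γ' → z ∈ H → False := by
    intro x y z heq hxy hx hy hz
    have hB : B2 {x, y} := by
      rw [hB2]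
      refine ⟨Finset.insert_subset (hΓ'Γ hx) (Finset.singleton_subset_iff.mpr (hΓ'Γ hy)),
        Finset.card_pair hxy, z, hz, S, hS4, ?_⟩
      have h1 : insert z ({x, y} : Finset (Finset V)) = {a, b, c} := by
        rw [← heq, Finset.insert_comm z x, Finset.pair_comm z y]
      rw [h1]; exact ⟨hcard3, hmem⟩
    obtain ⟨e, he, T, hT, heT⟩ := hcover _ (Or.inl hB)
    rcases Finset.mem_insert.mp he with rfl | he'
    · exact hnotD e hx T hT heT
    · obtain rfl := Finset.mem_singleton.mp he'
      exact hnotD e hy T hT heT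
  have hmem' : ∀ x ∈ ({a, b, c} : Finset (Finset V)), x ∈ H ∨ x ∈ Γ' := by
    intro x hx; exact Finset.mem_union.mp (htsub hx)
  have ha := hmem' a (Finset.mem_insert_self _ _)
  have hb := hmem' b (Finset.mem_insert_of_mem (Finset.mem_insert_self _ _))
  have hc := hmem' c (Finset.mem_insert_of_mem (Finset.mem_insert_of_mem (Finset.mem_singleton_self _)))
  have eqcab : ({c, a, b} : Finset (Finset V)) = {a, b, c} := by rw [Finset.insert_comm c a, Finset.pair_comm c b]
  have eqbac : ({b, a, c} : Finset (Finset V)) = {a, b, c} := Finset.insert_comm b a {c}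
  have eqbca : ({b, c, a} : Finset (Finset V)) = {a, b, c} := by rw [Finset.insert_comm b c, Finset.pair_comm b a, Finset.insert_comm c a, Finset.pair_comm c b]
  have eqacb : ({a, c, b} : Finset (Finset V)) = {a, b, c} := by rw [Finset.pair_comm c b]
  rcases ha with ha | ha <;> rcases hb with hb | hb <;> rcases hc with hc | hc
  · exact hHfree ⟨{a, b, c}, Finset.insert_subset ha
      (Finset.insert_subset hb (Finset.singleton_subset_iff.mpr hc)),
      S, hS4, hcard3, hmem⟩
  · exact case1 c a b eqcab hc ha hb
  · exact case1 b a c eqbac hb ha hc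
  · exact case2 b c a eqbca hbc hb hc ha
  · exact case1 a b c rfl ha hb hc
  · exact case2 a c b eqacb hac ha hc hb
  · exact case2 a b c rfl hab ha hb hc
  · -- all three in Γ'
    have hB : B3 {a, b, c} := by
      rw [hB3]
      exact ⟨Finset.insert_subset (hΓ'Γ ha)
        (Finset.insert_subset (hΓ'Γ hb) (Finset.singleton_subset_iff.mpr (hΓ'Γ hc))),
        S, hS4, hcard3, hmem⟩
    obtain ⟨e, he, T, hT, heT⟩ := hcover _ (Or.inr hB)
    rcases Finset.mem_insert.mp he with rfl | he'
    · exact hnotD e ha T hT heT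
    rcases Finset.mem_insert.mp he' with rfl | he''
    · exact hnotD e hb T hT heT
    obtain rfl := Finset.mem_singleton.mp he''
    exact hnotD e hc T hT heT
end
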